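/- For any rack X, the relation Q_X defined by (x,y) ∈ Q_X iff x = y ◁^k y for some integer k, is a congruence on X: it is reflexive, symmetric, transitive and compatible with the rack operation (if (a,b) ∈ Q_X and (c,d) ∈ Q_X then (a ◁ c, b ◁ d) ∈ Q_X). -/

import Mathlib

/-- A rack: a set with operations `◁`, `◁⁻¹` satisfying (R1) and (R2). -/
class PaperRack (X : Type*) where
  act : X → X → X
  inv : X → X → X
  r1a : ∀ x y, inv (act x y) y = x
  r1b : ∀ x y, act (inv x y) y = x
  r2 : ∀ x y z, act (act x y) z = act (act x z) (act y z)

infixl:70 " ◁ " => PaperRack.act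
infixl:70 " ◁⁻¹ " => PaperRack.inv

/-- `y ◁^n y` for a natural number `n`. -/
def selfIterPos {X : Type*} [PaperRack X] (y : X) : ℕ → X
  | 0 => y
  | n + 1 => selfIterPos y n ◁ selfIterPos y n

/-- `y ◁^k y` for an integer `k` (using `◁⁻¹` when `k < 0`, with `y ◁^0 y = y`). -/
def selfIter {X : Type*} [PaperRack X] (y : X) : ℤ → X
  | Int.ofNat n => selfIterPos y n
  | Int.negSucc n =>
      (fun m => Nat.rec (motive := fun _ => X) (y ◁⁻¹ y)
        (fun _ z => z ◁⁻¹ z) m) n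

/-- The relation `Q_X`: `(x, y) ∈ Q_X` iff `x = y ◁^k y` for some integer `k`. -/
def QX {X : Type*} [PaperRack X] (x y : X) : Prop :=
  ∃ k : ℤ, x = selfIter y k

/-! The self-action `s y = y ◁ y` is a permutation of `X` with `y ◁^k y = s^k y`, so `Q_X` is the
relation of lying in the same `s`-cycle, an equivalence. By (R2), `s` commutes with every right
translation `· ◁ d`, which transports `s`-cycles to `s`-cycles, while `u ◁ s y = u ◁ y` makes
`u ◁ c` depend only on the `s`-cycle of `c`. -/

namespace Equiv.Perm

theorem SameCycle.apply_eq_of_forall_apply_eq {α β : Type*} {σ : Perm α} {f : α → β}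
    (hf : ∀ x, f (σ x) = f x) {x y : α} (h : σ.SameCycle x y) : f x = f y := by
  have hf_inv (x : α) : f (σ⁻¹ x) = f x := by simpa using (hf (σ⁻¹ x)).symm
  obtain ⟨k, rfl⟩ := h
  induction k using Int.induction_on with
  | zero => rfl
  | succ n ih => rw [ih, add_comm, zpow_add, zpow_one, mul_apply, hf]
  | pred n ih => rw [ih, sub_eq_neg_add, zpow_add, zpow_neg_one, mul_apply, hf_inv]

end Equiv.Perm

namespace PaperRack

open Quandles Equiv Perm

/-- Mathlib's racks act on the left: `x ◃ y` is the paper's `y ◁ x`. -/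
abbrev toRack (X : Type*) [PaperRack X] : Rack X where
  act x y := y ◁ x
  self_distrib := r2 _ _ _
  invAct x y := y ◁⁻¹ x
  left_inv x y := r1a y x
  right_inv x y := r1b y x

attribute [local instance] toRack

variable {X : Type*} [PaperRack X]

theorem selfIter_eq_zpow_selfApplyEquiv (y : X) (k : ℤ) :
    selfIter y k = (Rack.selfApplyEquiv X ^ k) y := by
  cases k with
  | ofNat n =>
    rw [Int.ofNat_eq_natCast, zpow_natCast]
    induction n with
    | zero => rfl
    | succ n ih => rw [pow_succ', mul_apply, ← ih]; rfl
  | negSucc n =>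
    rw [zpow_negSucc, ← inv_pow]
    induction n with
    | zero => rfl
    | succ n ih => rw [pow_succ', mul_apply, ← ih]; rfl

theorem qx_eq_sameCycle : (QX : X → X → Prop) = SameCycle (Rack.selfApplyEquiv X) := by
  ext x y
  rw [sameCycle_comm]
  simp only [QX, SameCycle, selfIter_eq_zpow_selfApplyEquiv, eq_comm]

theorem equivalence_qx : Equivalence (QX (X := X)) := by
  rw [qx_eq_sameCycle]
  exact SameCycle.equivalence _

theorem commute_act'_selfApplyEquiv (d : X) :
    Commute (Rack.act' d) (Rack.selfApplyEquiv X : Perm X) :=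
  Equiv.ext fun _ => Shelf.self_distrib

theorem qx_act {a b c d : X} (hab : QX a b) (hcd : QX c d) : QX (a ◁ c) (b ◁ d) := by
  rw [qx_eq_sameCycle] at *
  have hc : a ◁ c = a ◁ d :=
    hcd.apply_eq_of_forall_apply_eq (f := (a ◁ ·)) fun _ => Rack.self_act_act_eq
  rw [hc]
  have h := hab.conj (g := Rack.act' d)
  rwa [(commute_act'_selfApplyEquiv d).mul_inv_cancel] at h

end PaperRack

/-- `Q_X` is a congruence: it is reflexive, symmetric, transitive and
compatible with the rack operation. -/
theorem QX_is_congruence {X : Type*} [PaperRack X] :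
    (∀ x : X, QX x x) ∧
    (∀ x y : X, QX x y → QX y x) ∧
    (∀ x y z : X, QX x y → QX y z → QX x z) ∧
    (∀ a b c d : X, QX a b → QX c d → QX (a ◁ c) (b ◁ d)) :=
  ⟨PaperRack.equivalence_qx.refl, fun _ _ => PaperRack.equivalence_qx.symm,
    fun _ _ _ => PaperRack.equivalence_qx.trans, fun _ _ _ _ => PaperRack.qx_act⟩
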